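/- arXiv:1612.03423 — 3 statements merged into one kernel-verified Lean document; each statement's English description precedes it below -/
import Mathlib

section
/- If an effect algebra satisfies the coherence law (whenever p⊥q, q⊥r, r⊥p, the sum p⊕q⊕r is defined), then with the induced order and orthocomplement p ↦ p^c it is an orthomodular poset, and for orthogonal p, q one has p⊕q = p∨q. -/
/-!
The induced order is characterised by orthogonality to complements: `p ≤ q ↔ p ⊥ q^c`.
Hence `^c` is an order-reversing involution, and for orthogonal `p, q` and any upper bound `t`
the elements `p, q, t^c` are pairwise orthogonal, so coherence gives `(p ⊕ q) ⊥ t^c`,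
i.e. `p ⊕ q ≤ t`. For `p ≤ q`, write `q = p ⊕ m`: then `m` is the meet of `q` and `p^c`
(again by coherence and cancellation), and `q = p ⊕ m = p ∨ m` is the orthomodular law.
-/

structure EffectAlgebra (α : Type*) where
  defined : α → α → Prop
  add : α → α → α
  zero : α
  one : α
  E1_def : ∀ p q, defined p q → defined q p
  E1_comm : ∀ p q, defined p q → add p q = add q p
  E2_def₁ : ∀ p q r, defined q r → defined p (add q r) → defined p q
  E2_def₂ : ∀ p q r, defined q r → defined p (add q r) → defined (add p q) r
  E2_assoc : ∀ p q r, defined q r → defined p (add q r) →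
    add p (add q r) = add (add p q) r
  E3 : ∀ p, ∃! q, defined p q ∧ add p q = one
  E4 : ∀ p, defined p one → p = zero

namespace EffectAlgebra

variable {α : Type*}

/-- The orthosupplement `p^c`: the unique `q` with `p ⊕ q = 𝟙`. -/
noncomputable def compl (E : EffectAlgebra α) (p : α) : α :=
  (E.E3 p).exists.choose

/-- The induced order: `p ≤ q` iff `∃ r, p ⊕ r` is defined and equals `q`. -/
def le (E : EffectAlgebra α) (p q : α) : Prop :=
  ∃ r, E.defined p r ∧ E.add p r = q

/-- `s` is the supremum of `p` and `q` w.r.t. the induced order. -/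
def isSup (E : EffectAlgebra α) (p q s : α) : Prop :=
  E.le p s ∧ E.le q s ∧ ∀ t, E.le p t → E.le q t → E.le s t

/-- `m` is the infimum of `p` and `q` w.r.t. the induced order. -/
def isInf (E : EffectAlgebra α) (p q m : α) : Prop :=
  E.le m p ∧ E.le m q ∧ ∀ t, E.le t p → E.le t q → E.le t m

end EffectAlgebra

namespace EffectAlgebra

variable {α : Type*}

def Coherent (E : EffectAlgebra α) : Prop :=
  ∀ p q r, E.defined p q → E.defined q r → E.defined r p → E.defined (E.add p q) r

variable (E : EffectAlgebra α)

theorem defined_compl (p : α) : E.defined p (E.compl p) :=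
  (E.E3 p).exists.choose_spec.1

theorem add_compl (p : α) : E.add p (E.compl p) = E.one :=
  (E.E3 p).exists.choose_spec.2

theorem eq_compl_of_add_eq_one {p q : α} (h : E.defined p q) (hq : E.add p q = E.one) :
    q = E.compl p :=
  (E.E3 p).unique ⟨h, hq⟩ ⟨E.defined_compl p, E.add_compl p⟩

theorem compl_compl (p : α) : E.compl (E.compl p) = p := by
  have h := E.E1_def _ _ (E.defined_compl p)
  refine (E.eq_compl_of_add_eq_one h ?_).symm
  rw [E.E1_comm _ _ h, E.add_compl]

theorem compl_injective : Function.Injective E.compl :=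
  Function.LeftInverse.injective E.compl_compl

theorem defined_add_left_comm {a b c : α} (hab : E.defined a b)
    (habc : E.defined (E.add a b) c) :
    E.defined a c ∧ E.defined b (E.add a c) ∧
      E.add (E.add a b) c = E.add b (E.add a c) := by
  have hcab : E.defined c (E.add a b) := E.E1_def _ _ habc
  have hca : E.defined c a := E.E2_def₁ c a b hab hcab
  have hcab' : E.defined (E.add c a) b := E.E2_def₂ c a b hab hcab
  rw [E.E1_comm c a hca] at hcab'
  refine ⟨E.E1_def _ _ hca, E.E1_def _ _ hcab', ?_⟩
  rw [E.E1_comm _ _ habc, E.E2_assoc c a b hab hcab, E.E1_comm c a hca,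
    E.E1_comm _ _ hcab']

-- `a ⊕ (a ⊕ b)^c` is the complement of both `b` and `c`.
theorem add_left_cancel {a b c : α} (hab : E.defined a b) (hac : E.defined a c)
    (h : E.add a b = E.add a c) : b = c := by
  have hb := E.defined_compl (E.add a b)
  have hc : E.defined (E.add a c) (E.compl (E.add a b)) := h ▸ hb
  obtain ⟨-, hb', eb⟩ := E.defined_add_left_comm hab hb
  obtain ⟨-, hc', ec⟩ := E.defined_add_left_comm hac hc
  rw [E.add_compl] at eb
  rw [← h, E.add_compl] at ec
  apply E.compl_injective
  rw [← E.eq_compl_of_add_eq_one hb' eb.symm, ← E.eq_compl_of_add_eq_one hc' ec.symm]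

theorem le_add_right {p q : α} (h : E.defined p q) : E.le p (E.add p q) :=
  ⟨q, h, rfl⟩

theorem le_add_left {p q : α} (h : E.defined p q) : E.le q (E.add p q) :=
  ⟨p, E.E1_def _ _ h, (E.E1_comm _ _ h).symm⟩

theorem le_iff_defined_compl {p q : α} : E.le p q ↔ E.defined p (E.compl q) := by
  constructor
  · rintro ⟨r, hr, rfl⟩
    exact (E.defined_add_left_comm hr (E.defined_compl _)).1
  · intro h
    obtain ⟨hu, hqu, e⟩ := E.defined_add_left_comm h (E.defined_compl _)
    rw [E.add_compl] at e
    refine ⟨_, hu, ?_⟩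
    rw [E.eq_compl_of_add_eq_one hqu e.symm, E.compl_compl]

theorem compl_le_compl {p q : α} (h : E.le p q) : E.le (E.compl q) (E.compl p) := by
  rw [le_iff_defined_compl, compl_compl] at *
  exact E.E1_def _ _ h

theorem le_of_add_le_add_left {p t m : α} (hpt : E.defined p t) (hpm : E.defined p m)
    (h : E.le (E.add p t) (E.add p m)) : E.le t m := by
  obtain ⟨s, hs, e⟩ := h
  rw [E.E1_comm _ _ hpt] at hs e
  obtain ⟨hts, hpts, e'⟩ := E.defined_add_left_comm (E.E1_def _ _ hpt) hs
  exact ⟨s, hts, E.add_left_cancel hpts hpm (e' ▸ e)⟩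

variable {E}

theorem Coherent.isSup_add (hE : E.Coherent) {p q : α} (h : E.defined p q) :
    E.isSup p q (E.add p q) := by
  refine ⟨E.le_add_right h, E.le_add_left h, fun t hpt hqt => ?_⟩
  rw [le_iff_defined_compl] at *
  exact hE p q _ h hqt (E.E1_def _ _ hpt)

theorem Coherent.isSup_compl (hE : E.Coherent) (p : α) : E.isSup p (E.compl p) E.one :=
  E.add_compl p ▸ hE.isSup_add (E.defined_compl p)

theorem Coherent.isInf_compl (hE : E.Coherent) {p m : α} (h : E.defined p m) :
    E.isInf (E.add p m) (E.compl p) m := by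
  have hmp : E.le m (E.compl p) := by
    rw [le_iff_defined_compl, compl_compl]
    exact E.E1_def _ _ h
  refine ⟨E.le_add_left h, hmp, fun t htq htp => ?_⟩
  rw [le_iff_defined_compl, compl_compl] at htp
  have hpq : E.defined p (E.compl (E.add p m)) :=
    E.le_iff_defined_compl.mp (E.le_add_right h)
  have hptq := hE p t _ (E.E1_def _ _ htp) (E.le_iff_defined_compl.mp htq) (E.E1_def _ _ hpq)
  exact E.le_of_add_le_add_left (E.E1_def _ _ htp) h (E.le_iff_defined_compl.mpr hptq)

end EffectAlgebra

/-- If an effect algebra satisfies the coherence law, then with the induced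
order and the orthosupplement it is an orthomodular poset, and `p ⊕ q` is the
supremum of orthogonal `p, q`. -/
theorem coherence_implies_orthomodularPoset {α : Type*} (E : EffectAlgebra α)
    (coh : ∀ p q r, E.defined p q → E.defined q r → E.defined r p →
      E.defined (E.add p q) r) :
    (∀ p q, E.le p q → E.le (E.compl q) (E.compl p)) ∧
    (∀ p, E.compl (E.compl p) = p) ∧
    (∀ p q, E.defined p q → E.isSup p q (E.add p q)) ∧
    (∀ p, E.isSup p (E.compl p) E.one) ∧
    (∀ p q, E.le p q → ∃ m, E.isInf q (E.compl p) m ∧ E.isSup p m q) := by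
  have hE : E.Coherent := coh
  refine ⟨fun _ _ => E.compl_le_compl, E.compl_compl, fun _ _ => hE.isSup_add,
    hE.isSup_compl, ?_⟩
  rintro p _ ⟨m, hm, rfl⟩
  exact ⟨m, hE.isInf_compl hm, hE.isSup_add hm⟩
end

section
/- Every orthomodular poset, with p⊕q defined as p∨q when p ≤ q^c, is an effect algebra satisfying the coherence law. -/
/-! In an orthomodular poset the sum `p ⊕ q = p ∨ q` is the least upper bound of `{p, q}`, so
commutativity, associativity and coherence are statements about least upper bounds of two- and
three-element sets, and the only effect-algebra axiom that needs the orthomodular law is the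
uniqueness of the complement in E3: if `p ⊥ q` and `p ∨ q = 𝟙`, then `q ≤ p^c` and the law gives
`p^c = q ∨ (p^c ∧ q^c) = q ∨ (p ∨ q)^c = q ∨ 0 = q`. -/

theorem IsLUB.isLUB_pair_iff_isLUB_insert {α : Type*} [Preorder α] {s : Set α} {a b p : α} (ha : IsLUB s a) :
    IsLUB {p, a} b ↔ IsLUB (insert p s) b := by
  simp only [IsLUB, upperBounds_insert, upperBounds_singleton, ha.upperBounds_eq]

namespace OrthomodularPoset

open Function

variable {α : Type*} [PartialOrder α] {compl : α → α} {sup : α → α → α} {p q r : α}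

theorem le_compl_symm (hanti : Antitone compl) (hinv : Involutive compl) (h : p ≤ compl q) :
    q ≤ compl p :=
  hinv q ▸ hanti h

theorem compl_top [OrderBot α] [OrderTop α] (hanti : Antitone compl) (hinv : Involutive compl) :
    compl ⊤ = ⊥ :=
  le_bot_iff.mp (hinv ⊥ ▸ hanti le_top)

theorem compl_bot [OrderBot α] [OrderTop α] (hanti : Antitone compl) (hinv : Involutive compl) :
    compl ⊥ = ⊤ := by
  rw [← compl_top hanti hinv, hinv]

theorem sup_comm (hanti : Antitone compl) (hinv : Involutive compl)
    (hsup : ∀ p q : α, p ≤ compl q → IsLUB {p, q} (sup p q)) (h : p ≤ compl q) :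
    sup p q = sup q p :=
  (hsup p q h).unique (Set.pair_comm q p ▸ hsup q p (le_compl_symm hanti hinv h))

theorem sup_le_compl (hsup : ∀ p q : α, p ≤ compl q → IsLUB {p, q} (sup p q))
    (hpq : p ≤ compl q) (hpr : p ≤ compl r) (hqr : q ≤ compl r) : sup p q ≤ compl r :=
  (hsup p q hpq).2 (by simp [hpr, hqr])

theorem sup_bot [OrderBot α] [OrderTop α] (hanti : Antitone compl) (hinv : Involutive compl)
    (hsup : ∀ p q : α, p ≤ compl q → IsLUB {p, q} (sup p q)) (p : α) : sup p ⊥ = p :=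
  (hsup p ⊥ (compl_bot hanti hinv ▸ le_top)).unique ⟨by simp, fun _ h => h (by simp)⟩

theorem le_compl_left_of_le_compl_sup (hanti : Antitone compl)
    (hsup : ∀ p q : α, p ≤ compl q → IsLUB {p, q} (sup p q))
    (hqr : q ≤ compl r) (hp : p ≤ compl (sup q r)) : p ≤ compl q :=
  hp.trans (hanti ((hsup q r hqr).1 (by simp)))

theorem le_compl_right_of_le_compl_sup (hanti : Antitone compl)
    (hsup : ∀ p q : α, p ≤ compl q → IsLUB {p, q} (sup p q))
    (hqr : q ≤ compl r) (hp : p ≤ compl (sup q r)) : p ≤ compl r :=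
  hp.trans (hanti ((hsup q r hqr).1 (by simp)))

theorem sup_assoc (hanti : Antitone compl) (hsup : ∀ p q : α, p ≤ compl q → IsLUB {p, q} (sup p q))
    (hqr : q ≤ compl r) (hp : p ≤ compl (sup q r)) :
    sup p (sup q r) = sup (sup p q) r := by
  have hpq := le_compl_left_of_le_compl_sup hanti hsup hqr hp
  have hpr := le_compl_right_of_le_compl_sup hanti hsup hqr hp
  have hpqr := sup_le_compl hsup hpq hpr hqr
  have left : IsLUB {p, q, r} (sup p (sup q r)) :=
    ((hsup q r hqr).isLUB_pair_iff_isLUB_insert).mp (hsup p _ hp)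
  have right : IsLUB {p, q, r} (sup (sup p q) r) := by
    rw [Set.pair_comm q r, Set.insert_comm]
    exact (hsup p q hpq).isLUB_pair_iff_isLUB_insert.mp (Set.pair_comm _ r ▸ hsup _ r hpqr)
  exact left.unique right

theorem eq_compl_of_sup_eq_top [OrderBot α] [OrderTop α] (hanti : Antitone compl)
    (hinv : Involutive compl) (hsup : ∀ p q : α, p ≤ compl q → IsLUB {p, q} (sup p q))
    (hom : ∀ p q : α, p ≤ q → q = sup p (compl (sup (compl q) p)))
    (hpq : p ≤ compl q) (htop : sup p q = ⊤) : q = compl p := by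
  calc q = sup q ⊥ := (sup_bot hanti hinv hsup q).symm
    _ = sup q (compl (sup (compl (compl p)) q)) := by rw [hinv, htop, compl_top hanti hinv]
    _ = compl p := (hom q (compl p) (le_compl_symm hanti hinv hpq)).symm

end OrthomodularPoset

/-- Every orthomodular poset, with `p ⊕ q := p ∨ q` defined when `p ≤ q^c`,
is an effect algebra satisfying the coherence law. -/
theorem orthomodularPoset_is_effectAlgebra {α : Type*} [PartialOrder α]
    [OrderBot α] [OrderTop α] (compl : α → α)
    (hrev : ∀ p q : α, p ≤ q → compl q ≤ compl p)
    (hinv : ∀ p : α, compl (compl p) = p)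
    (sup : α → α → α)
    (hsup : ∀ p q : α, p ≤ compl q → IsLUB {p, q} (sup p q))
    (hcompl : ∀ p : α, sup p (compl p) = ⊤)
    (hom : ∀ p q : α, p ≤ q → q = sup p (compl (sup (compl q) p))) :
    -- E1
    (∀ p q : α, p ≤ compl q → q ≤ compl p ∧ sup p q = sup q p) ∧
    -- E2
    (∀ p q r : α, q ≤ compl r → p ≤ compl (sup q r) →
      p ≤ compl q ∧ sup p q ≤ compl r ∧
        sup p (sup q r) = sup (sup p q) r) ∧
    -- E3
    (∀ p : α, ∃! q, p ≤ compl q ∧ sup p q = ⊤) ∧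
    -- E4
    (∀ p : α, p ≤ compl ⊤ → p = ⊥) ∧
    -- coherence law
    (∀ p q r : α, p ≤ compl q → q ≤ compl r → p ≤ compl r →
      sup p q ≤ compl r) := by
  open OrthomodularPoset in
  have hanti : Antitone compl := fun p q h => hrev p q h
  refine ⟨fun p q h => ⟨le_compl_symm hanti hinv h, sup_comm hanti hinv hsup h⟩,
    fun p q r hqr hp => ?_, fun p => ?_, fun p hp => le_bot_iff.mp (compl_top hanti hinv ▸ hp),
    fun p q r hpq hqr hpr => sup_le_compl hsup hpq hpr hqr⟩
  · have hpq := le_compl_left_of_le_compl_sup hanti hsup hqr hp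
    have hpr := le_compl_right_of_le_compl_sup hanti hsup hqr hp
    exact ⟨hpq, sup_le_compl hsup hpq hpr hqr, sup_assoc hanti hsup hqr hp⟩
  · refine ⟨compl p, ⟨(hinv p).symm ▸ le_rfl, hcompl p⟩, ?_⟩
    rintro q ⟨hpq, htop⟩
    exact eq_compl_of_sup_eq_top hanti hinv hsup hom hpq htop
end

section
/- For n ≥ 3, the concrete orthoposet of even-cardinality subsets of {1,...,2n} is not a lattice: there exist two elements with no least upper bound in Δ. -/
/-- Least upper bound of `a` and `b` inside the family `Δ`, ordered by `⊆`. -/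
def lubIn {Ω : Type*} [DecidableEq Ω] (Δ : Set (Finset Ω)) (a b s : Finset Ω) : Prop :=
  s ∈ Δ ∧ a ⊆ s ∧ b ⊆ s ∧ ∀ c ∈ Δ, a ⊆ c → b ⊆ c → s ⊆ c

/-- A least upper bound would lie between `a ∪ b` and `c₁ ∩ c₂`, hence equal `a ∪ b`. -/
theorem not_exists_lubIn_of_inter_subset {Ω : Type*} [DecidableEq Ω] {Δ : Set (Finset Ω)}
    {a b c₁ c₂ : Finset Ω} (hab : a ∪ b ∉ Δ) (hc₁ : c₁ ∈ Δ) (hc₂ : c₂ ∈ Δ)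
    (h₁ : a ∪ b ⊆ c₁) (h₂ : a ∪ b ⊆ c₂) (hinter : c₁ ∩ c₂ ⊆ a ∪ b) :
    ¬ ∃ s, lubIn Δ a b s := by
  rintro ⟨s, hsΔ, has, hbs, hmin⟩
  have hs₁ := hmin c₁ hc₁ (Finset.union_subset_left h₁) (Finset.union_subset_right h₁)
  have hs₂ := hmin c₂ hc₂ (Finset.union_subset_left h₂) (Finset.union_subset_right h₂)
  have hs : s = a ∪ b :=
    (Finset.subset_inter hs₁ hs₂ |>.trans hinter).antisymm (Finset.union_subset has hbs)
  exact hab (hs ▸ hsΔ)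

/-- With `0, …, 4` distinct, `{0, 1}` and `{0, 2}` have the two minimal even upper bounds
`{0, 1, 2, 3}` and `{0, 1, 2, 4}`, which meet in the odd set `{0, 1, 2}`. -/
theorem exists_even_pair_not_exists_lubIn {Ω : Type*} [DecidableEq Ω] (f : Fin 5 ↪ Ω) :
    ∃ A B : Finset Ω, Even A.card ∧ Even B.card ∧
      ¬ ∃ s, lubIn {C : Finset Ω | Even C.card} A B s := by
  have hmem (t : Finset (Fin 5)) : t.map f ∈ {C : Finset Ω | Even C.card} ↔ Even t.card := by
    rw [Set.mem_ofPred_eq, Finset.card_map]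
  refine ⟨({0, 1} : Finset (Fin 5)).map f, ({0, 2} : Finset (Fin 5)).map f,
    (hmem _).mpr (by decide), (hmem _).mpr (by decide), ?_⟩
  refine not_exists_lubIn_of_inter_subset (c₁ := ({0, 1, 2, 3} : Finset (Fin 5)).map f)
    (c₂ := ({0, 1, 2, 4} : Finset (Fin 5)).map f) ?_ ((hmem _).mpr (by decide))
    ((hmem _).mpr (by decide)) ?_ ?_ ?_ <;>
    simp only [← Finset.map_union, ← Finset.map_inter, Finset.map_subset_map, hmem]
  all_goals decide

/-- For `n ≥ 3`, the concrete orthoposet of even-cardinality subsets of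
`{1,…,2n}` is not a lattice: some pair has no least upper bound in `Δ`. -/
theorem even_subsets_not_lattice (n : ℕ) (hn : 3 ≤ n) :
    ∃ A B : Finset (Fin (2 * n)), Even A.card ∧ Even B.card ∧
      ¬ ∃ s, lubIn {C : Finset (Fin (2 * n)) | Even C.card} A B s :=
  exists_even_pair_not_exists_lubIn (Fin.castLEEmb (by omega))
end
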